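/- arXiv:2409.20460 — 2 statements merged into one kernel-verified Lean document; each statement's English description precedes it below -/
import Mathlib

section
/- For every integer k ≥ 2, with τ = 1 - (1/(k+1))^(1/k), the quantity min( (1-τ)·k/(2(k-1)), max( ((k+1)/(2k))·(1 - τ - (1-τ)^(k+1)), (3/2)·τ·ln(1/τ) - (1/2)·τ·(1-τ) ) ) is at least 0.4. -/
/-!
Write `x = 1 - τ`, so that `x ^ k = 1 / (k + 1)`. The first entry of the `max` is then exactly
`x / 2`, and the first entry of the `min` is at least `x / 2`. For `k ≥ 12` we have
`(k + 1) * 4 ^ k ≤ 5 ^ k`, i.e. `x ≥ 4 / 5`, and both are at least `0.4`. For `2 ≤ k ≤ 11`,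
where `x < 4 / 5`, the bound comes from the second entry of the `max`; its margin is small
(about `0.004` at `k = 11`), so `x` is pinned to an interval of width `10⁻⁴` by comparing `k`-th
powers, and `log (1 / τ)` is bounded below through `(1 - c / n) ^ n ≤ exp (-c)`.
-/

open Real

noncomputable def ratioBound (k : ℕ) (τ : ℝ) : ℝ :=
  min ((1-τ)*(k:ℝ)/(2*((k:ℝ)-1)))
    (max (((k:ℝ)+1)/(2*(k:ℝ)) * (1 - τ - (1-τ)^(k+1)))
      ((3/2)*τ*Real.log (1/τ) - (1/2)*τ*(1-τ)))

theorem succ_mul_four_pow_le_five_pow {k : ℕ} (hk : 12 ≤ k) : (k + 1) * 4 ^ k ≤ 5 ^ k := by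
  induction k, hk using Nat.le_induction with
  | base => norm_num
  | succ n _ ih =>
    calc (n + 1 + 1) * 4 ^ (n + 1) = 4 * (n + 2) * 4 ^ n := by ring
      _ ≤ 5 * (n + 1) * 4 ^ n := Nat.mul_le_mul_right _ (by omega)
      _ = 5 * ((n + 1) * 4 ^ n) := by ring
      _ ≤ 5 ^ (n + 1) := by rw [pow_succ']; gcongr

theorem le_log_inv_of_le_one_sub_div_pow {τ t : ℝ} {n : ℕ} (hτ : 0 < τ) (ht : t ≤ n)
    (h : τ ≤ (1 - t / n) ^ n) : t ≤ log (1 / τ) := by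
  rw [one_div, log_inv, le_neg, log_le_iff_le_exp hτ]
  exact h.trans (one_sub_div_pow_le_exp_neg ht)

theorem four_fifths_le_of_pow_eq {k : ℕ} (hk : 12 ≤ k) {x : ℝ} (hx : 0 ≤ x)
    (hxk : x ^ k = 1 / (k + 1)) : 4 / 5 ≤ x := by
  refine le_of_pow_le_pow_left₀ (n := k) (by omega) hx ?_
  have : ((k : ℝ) + 1) * 4 ^ k ≤ 5 ^ k := by exact_mod_cast succ_mul_four_pow_le_five_pow hk
  rw [hxk, div_pow, div_le_div_iff₀ (by positivity) (by positivity)]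
  linarith

theorem succ_div_mul_sub_pow_succ_of_pow_eq {k : ℕ} (hk : k ≠ 0) {x : ℝ}
    (hxk : x ^ k = 1 / (k + 1)) : ((k : ℝ) + 1) / (2 * k) * (x - x ^ (k + 1)) = x / 2 := by
  rw [pow_succ, hxk]
  field_simp
  ring

theorem le_ratioBound_of_twelve_le {k : ℕ} (hk : 12 ≤ k) {τ : ℝ} (hτ : τ ≤ 1)
    (hτk : (1 - τ) ^ k = 1 / (k + 1)) : 0.4 ≤ ratioBound k τ := by
  have hx := four_fifths_le_of_pow_eq hk (by linarith) hτk
  have hkR : (12 : ℝ) ≤ k := by exact_mod_cast hk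
  refine le_min ?_ (le_max_of_le_left ?_)
  · rw [le_div_iff₀ (by linarith)]
    nlinarith
  · rw [succ_div_mul_sub_pow_succ_of_pow_eq (by omega) hτk]
    linarith

theorem le_ratioBound_of_approx {k : ℕ} (hk : 2 ≤ k) {τ : ℝ} (hτ : τ ≤ 1)
    (hτk : (1 - τ) ^ k = 1 / (k + 1)) (x₀ c : ℝ) (hx₀ : x₀ ^ k ≤ 1 / (k + 1))
    (hx₁ : 1 / (k + 1) ≤ (x₀ + 1 / 10000) ^ k) (hhalf : 1 / 2 ≤ x₀) (hlt : x₀ + 1 / 10000 < 1)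
    (hc : 0 ≤ c) (hc128 : c ≤ 128) (hlog : 1 - x₀ ≤ (1 - c / 128) ^ 128)
    (hfirst : 0.4 ≤ x₀ * k / (2 * (k - 1)))
    (hsecond : 0.4 ≤ 3 / 2 * (1 - (x₀ + 1 / 10000)) * c - 1 / 2 * (1 - x₀) * x₀) :
    0.4 ≤ ratioBound k τ := by
  have hkR : (2 : ℝ) ≤ k := by exact_mod_cast hk
  have hxlo : x₀ ≤ 1 - τ := le_of_pow_le_pow_left₀ (by omega) (by linarith) (hτk ▸ hx₀)
  have hxhi : 1 - τ ≤ x₀ + 1 / 10000 :=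
    le_of_pow_le_pow_left₀ (by omega) (by linarith) (hτk ▸ hx₁)
  have hτ0 : 0 < τ := by linarith
  have hclog : c ≤ log (1 / τ) :=
    le_log_inv_of_le_one_sub_div_pow hτ0 (by exact_mod_cast hc128)
      (by exact_mod_cast (by linarith : τ ≤ 1 - x₀).trans hlog)
  refine le_min ?_ (le_max_of_le_right ?_)
  · refine hfirst.trans ?_
    gcongr
    linarith
  · have hlogterm : (1 - (x₀ + 1 / 10000)) * c ≤ τ * log (1 / τ) :=
      mul_le_mul (by linarith) hclog hc hτ0.le
    have hquad : τ * (1 - τ) ≤ (1 - x₀) * x₀ := by nlinarith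
    linarith

theorem stmt_0 (k : ℕ) (hk : 2 ≤ k)
    (τ : ℝ) (hτ : τ = 1 - ((1:ℝ)/((k:ℝ)+1)) ^ ((1:ℝ)/(k:ℝ))) :
    min ((1-τ)*(k:ℝ)/(2*((k:ℝ)-1)))
      (max (((k:ℝ)+1)/(2*(k:ℝ)) * (1 - τ - (1-τ)^(k+1)))
        ((3/2)*τ*Real.log (1/τ) - (1/2)*τ*(1-τ))) ≥ 0.4 := by
  have hbase : (0 : ℝ) ≤ 1 / (k + 1) := by positivity
  have hτ1 : τ ≤ 1 := by rw [hτ]; linarith [rpow_nonneg hbase ((1 : ℝ) / k)]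
  have hτk : (1 - τ) ^ k = 1 / (k + 1) := by
    rw [hτ, sub_sub_cancel, one_div (k : ℝ), rpow_inv_natCast_pow hbase (by omega)]
  change 0.4 ≤ ratioBound k τ
  rcases le_or_gt 12 k with hk12 | hk12
  · exact le_ratioBound_of_twelve_le hk12 hτ1 hτk
  interval_cases k
  · apply le_ratioBound_of_approx hk hτ1 hτk (5773 / 10000) (83 / 100) <;> norm_num
  · apply le_ratioBound_of_approx hk hτ1 hτk (6299 / 10000) (95 / 100) <;> norm_num
  · apply le_ratioBound_of_approx hk hτ1 hτk (6687 / 10000) (105 / 100) <;> norm_num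
  · apply le_ratioBound_of_approx hk hτ1 hτk (6988 / 10000) (115 / 100) <;> norm_num
  · apply le_ratioBound_of_approx hk hτ1 hτk (7230 / 10000) (125 / 100) <;> norm_num
  · apply le_ratioBound_of_approx hk hτ1 hτk (7429 / 10000) (130 / 100) <;> norm_num
  · apply le_ratioBound_of_approx hk hτ1 hτk (7598 / 10000) (140 / 100) <;> norm_num
  · apply le_ratioBound_of_approx hk hτ1 hτk (7742 / 10000) (146 / 100) <;> norm_num
  · apply le_ratioBound_of_approx hk hτ1 hτk (7867 / 10000) (152 / 100) <;> norm_num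
  · apply le_ratioBound_of_approx hk hτ1 hτk (7977 / 10000) (1587 / 1000) <;> norm_num
end

section
/- For any real τ with 0 < τ < 1, (1/2)·τ·(1-τ)² + τ·ln(1/τ) evaluated at τ = 0.359 is at least 0.441, which is strictly greater than 1/e. -/
open Real

/-- The tangent line of `x ↦ log x⁻¹` at `x = 1 / e`. -/
lemma two_sub_exp_one_mul_le_log_inv {x : ℝ} (hx : 0 < x) : 2 - exp 1 * x ≤ log x⁻¹ := by
  have h := log_le_sub_one_of_pos (mul_pos (exp_pos 1) hx)
  rw [log_mul (exp_pos 1).ne' hx.ne', log_exp] at h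
  rw [log_inv]
  linarith

theorem stmt_17 :
    ((1/2) * (0.359:ℝ) * (1 - 0.359)^2 + 0.359 * Real.log (1/0.359) ≥ 0.441) ∧
    (0.441:ℝ) > 1/Real.exp 1 := by
  constructor
  · have hlog := two_sub_exp_one_mul_le_log_inv (x := 0.359) (by norm_num)
    rw [one_div]
    linarith [exp_one_lt_d9]
  · rw [gt_iff_lt, div_lt_iff₀ (exp_pos 1)]
    linarith [exp_one_gt_d9]
end
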